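/- arXiv:math/9905116 — 4 statements merged into one kernel-verified Lean document; each statement's English description precedes it below -/
import Mathlib

section
/- Assume that 𝔭 = 2^ℵ₀, i.e., every family F of infinite subsets of ω with |F| < 2^ℵ₀ such that every finite subfamily of F has infinite intersection admits an infinite pseudo-intersection (an infinite A ⊆ ω with A \ B finite for every B ∈ F). Then there exists a set X ⊆ 2^ω which is a γ-set (in the subspace topology) and a measure-zero set G ⊆ 2^ω such that X + G = 2^ω; in particular, X is a γ-set which is not strongly meager. -/
open Set MeasureTheory Filter Pointwise
open scoped ENNReal

/-- The Cantor space `2^ω`: functions `ω → {0,1}` with the product topology and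
coordinatewise addition mod 2 (via `ZMod 2`). -/
abbrev Cantor : Type := ℕ → ZMod 2

/-- `μ` is the product measure on `2^ω` giving each coordinate the uniform measure:
every cylinder prescribing the coordinates in a finite set `s` has measure `2^{-|s|}`.
(This property characterizes the product measure uniquely.) -/
def IsCantorProductMeasure (μ : Measure Cantor) : Prop :=
  ∀ (s : Finset ℕ) (f : ℕ → ZMod 2),
    μ {x : Cantor | ∀ i ∈ s, x i = f i} = (2 : ENNReal)⁻¹ ^ s.card

/-- A family `J` of subsets is an ω-cover of `X` if every finite subset of `X`
is contained in some member of `J`. -/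
def IsOmegaCover {α : Type*} (J : Set (Set α)) (X : Set α) : Prop :=
  ∀ F : Finset α, ↑F ⊆ X → ∃ U ∈ J, ↑F ⊆ U

/-- `X` is a γ-set (equivalently: `X` with the subspace topology is a γ-space):
for every ω-cover `J` of `X` by open subsets of the ambient space there is a sequence
`D n ∈ J` with `X ⊆ ⋃_m ⋂_{n>m} D n`. -/
def IsGammaSet {α : Type*} [TopologicalSpace α] (X : Set α) : Prop :=
  ∀ J : Set (Set α), (∀ U ∈ J, IsOpen U) → IsOmegaCover J X →
    ∃ D : ℕ → Set α, (∀ n, D n ∈ J) ∧ X ⊆ ⋃ m, ⋂ n > m, D n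

/-- The blocks endpoints `k_n = Σ_{i=0}^n 2^i = 2^{n+1} - 1`. -/
def kseq (n : ℕ) : ℕ := 2 ^ (n + 1) - 1

/-- `A_n = {x ∈ 2^ω : x ↾ [k_n, k_{n+1}) = 0}`. -/
def Aset (n : ℕ) : Set Cantor := {x | ∀ i ∈ Set.Ico (kseq n) (kseq (n + 1)), x i = 0}

/-- The null set `G = ⋂_m ⋃_{n>m} A_n`. -/
def Gset : Set Cantor := ⋂ m, ⋃ n > m, Aset n

/-- The rationals: eventually-zero elements of `2^ω`. -/
def Qset : Set Cantor := {z | ∀ᶠ n in atTop, z n = 0}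

/-- `𝒮 = {z ∈ 2^ω : z ↾ [k_n, k_{n+1}) = 1 for infinitely many n}`. -/
def Sset : Set Cantor :=
  {z | ∃ᶠ n in atTop, ∀ i ∈ Set.Ico (kseq n) (kseq (n + 1)), z i = 1}

/-- `[x]* = {z ∈ 𝒮 : z(n) ≤ x(n) for all but finitely many n}`. -/
def starSet (x : Cantor) : Set Cantor :=
  {z ∈ Sset | ∀ᶠ n in atTop, (z n).val ≤ (x n).val}

/-- `𝔭 = 2^{ℵ₀}`: every family of infinite subsets of `ω` of size `< 2^{ℵ₀}` with the
finite intersection property (all finite intersections infinite) has an infinite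
pseudo-intersection. -/
def PseudoIntersectionNumberEqContinuum : Prop :=
  ∀ F : Set (Set ℕ), Cardinal.mk F < 2 ^ Cardinal.aleph0 →
    (∀ A ∈ F, A.Infinite) →
    (∀ G : Finset (Set ℕ), ↑G ⊆ F → (⋂₀ (G : Set (Set ℕ))).Infinite) →
    ∃ A : Set ℕ, A.Infinite ∧ ∀ B ∈ F, (A \ B).Finite

/-- The first uncountable ordinal `ω₁`. -/
noncomputable def omega1 : Ordinal.{0} := (Cardinal.aleph 1).ord

/-- `C` is closed unbounded in `ω₁`: a subset of `ω₁` which is unbounded in `ω₁` and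
contains the supremum of every nonempty bounded subset of itself whose supremum is
below `ω₁`. -/
def IsClubIn (C : Set Ordinal.{0}) : Prop :=
  C ⊆ Set.Iio omega1 ∧ (∀ β < omega1, ∃ γ ∈ C, β < γ) ∧
    ∀ S : Set Ordinal.{0}, S ⊆ C → S.Nonempty → BddAbove S → sSup S < omega1 → sSup S ∈ C

/-- `T` is stationary in `ω₁`: it meets every closed unbounded subset of `ω₁`. -/
def IsStationaryIn (T : Set Ordinal.{0}) : Prop :=
  ∀ C : Set Ordinal.{0}, IsClubIn C → (T ∩ C).Nonempty

/-- Jensen's diamond principle `◊`: there is a sequence `(A_α)_{α<ω₁}` with `A_α ⊆ α`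
such that for every `B ⊆ ω₁` the set `{α < ω₁ : B ∩ α = A_α}` is stationary in `ω₁`. -/
def DiamondPrinciple : Prop :=
  ∃ A : Ordinal.{0} → Set Ordinal.{0}, (∀ α < omega1, A α ⊆ Set.Iio α) ∧
    ∀ B : Set Ordinal.{0}, B ⊆ Set.Iio omega1 →
      IsStationaryIn {α | α < omega1 ∧ B ∩ Set.Iio α = A α}

/-- The binary expansion map `f : 2^ω → [0,1]`, `f(x) = Σ_i x(i)·2^{-(i+1)}`. -/
noncomputable def binmap (x : Cantor) : ℝ := ∑' i : ℕ, ((x i).val : ℝ) / 2 ^ (i + 1)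

/-- `H = ⋂_m ⋃_{n>m} f(A_n)`. -/
noncomputable def Hset : Set ℝ := ⋂ m, ⋃ n > m, binmap '' (Aset n)

/-- The rational numbers as a subset of `ℝ`. -/
def Qreal : Set ℝ := Set.range ((↑) : ℚ → ℝ)

/-! ### Basic facts about the blocks -/

lemma kseq_lt_succ (n : ℕ) : kseq n < kseq (n + 1) := by
  have h1 : 2 ^ (n + 1) < 2 ^ (n + 2) := by
    exact Nat.pow_lt_pow_right (by norm_num) (by omega)
  have h2 : 1 ≤ 2 ^ (n + 1) := Nat.one_le_two_pow
  simp only [kseq]; omega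

lemma kseq_strictMono : StrictMono kseq :=
  strictMono_nat_of_lt_succ kseq_lt_succ

lemma kseq_pos (n : ℕ) : 1 ≤ kseq n := by
  have h2 : 2 ≤ 2 ^ (n + 1) := Nat.one_lt_two_pow_iff.mpr (by omega)
  simp only [kseq]; omega

lemma kseq_unbounded (l : ℕ) : ∃ m, l ≤ kseq m := by
  refine ⟨l, ?_⟩
  have := Nat.lt_two_pow_self (n := l)
  have h : 2 ^ l ≤ 2 ^ (l + 1) := Nat.pow_le_pow_right (by norm_num) (by omega)
  simp only [kseq]; omega

lemma kseq_card (n : ℕ) : kseq (n + 1) - kseq n = 2 ^ (n + 1) := by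
  have h1 : 1 ≤ 2 ^ (n + 1) := Nat.one_le_two_pow
  have h2 : 2 ^ (n + 2) = 2 * 2 ^ (n + 1) := by ring
  simp only [kseq]; omega

/-- Blocks are disjoint: a coordinate belongs to at most one block. -/
lemma block_disjoint {m m' i : ℕ} (h : m ≠ m')
    (h1 : i ∈ Set.Ico (kseq m) (kseq (m + 1))) (h2 : i ∈ Set.Ico (kseq m') (kseq (m' + 1))) :
    False := by
  rcases h1 with ⟨a1, b1⟩; rcases h2 with ⟨a2, b2⟩
  rcases Nat.lt_or_ge m m' with hlt | hge
  · have : kseq (m + 1) ≤ kseq m' := kseq_strictMono.le_iff_le.mpr (by omega)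
    omega
  · have hlt : m' < m := by omega
    have : kseq (m' + 1) ≤ kseq m := kseq_strictMono.le_iff_le.mpr (by omega)
    omega

/-! ### The set `G` is null -/

lemma Aset_measure {μ : Measure Cantor} (hμ : IsCantorProductMeasure μ) (n : ℕ) :
    μ (Aset n) = (2 : ENNReal)⁻¹ ^ (2 ^ (n + 1)) := by
  have h := hμ (Finset.Ico (kseq n) (kseq (n + 1))) (fun _ => 0)
  have hs : {x : Cantor | ∀ i ∈ Finset.Ico (kseq n) (kseq (n + 1)), x i = (fun _ => (0 : ZMod 2)) i}
      = Aset n := by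
    ext x
    simp only [Finset.mem_Ico, Set.mem_setOf_eq, Aset, Set.mem_Ico]
  rw [hs] at h
  rw [h, Nat.card_Ico, kseq_card]

lemma Gset_null {μ : Measure Cantor} (hμ : IsCantorProductMeasure μ) : μ Gset = 0 := by
  have key : ∀ m : ℕ, μ Gset ≤ (2 : ENNReal)⁻¹ ^ (m + 1) := by
    intro m
    have hsub : Gset ⊆ ⋃ k : ℕ, Aset (m + 1 + k) := by
      intro x hx
      have hx' : x ∈ ⋃ n > m, Aset n := by
        have := Set.mem_iInter.mp hx m
        exact this
      rcases Set.mem_iUnion.mp hx' with ⟨n, hn⟩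
      rcases Set.mem_iUnion.mp hn with ⟨hnm, hxa⟩
      exact Set.mem_iUnion.mpr ⟨n - (m + 1), by
        have : m + 1 + (n - (m + 1)) = n := by omega
        rw [this]; exact hxa⟩
    calc μ Gset ≤ μ (⋃ k : ℕ, Aset (m + 1 + k)) := measure_mono hsub
      _ ≤ ∑' k : ℕ, μ (Aset (m + 1 + k)) := measure_iUnion_le _
      _ ≤ ∑' k : ℕ, (2 : ENNReal)⁻¹ ^ (m + 2 + k) := by
          apply ENNReal.tsum_le_tsum
          intro k
          rw [Aset_measure hμ]
          apply pow_le_pow_of_le_one (by norm_num) (by norm_num)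
          calc m + 2 + k = (m + 1 + k) + 1 := by omega
            _ ≤ 2 ^ (m + 1 + k) + 2 ^ (m+1+k) := by
                have := Nat.lt_two_pow_self (n := m + 1 + k); omega
            _ = 2 ^ (m + 1 + k + 1) := by ring
      _ = (2 : ENNReal)⁻¹ ^ (m + 2) * ∑' k : ℕ, (2 : ENNReal)⁻¹ ^ k := by
          rw [← ENNReal.tsum_mul_left]
          congr 1; ext k; rw [pow_add]
      _ = (2 : ENNReal)⁻¹ ^ (m + 2) * 2 := by
          rw [ENNReal.tsum_geometric, ENNReal.one_sub_inv_two]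
          norm_num
      _ = (2 : ENNReal)⁻¹ ^ (m + 1) * ((2 : ENNReal)⁻¹ * 2) := by rw [pow_succ, mul_assoc]
      _ = (2 : ENNReal)⁻¹ ^ (m + 1) := by
          rw [ENNReal.inv_mul_cancel (by norm_num) (by norm_num), mul_one]
  by_contra h
  have hpos : 0 < μ Gset := pos_iff_ne_zero.mpr h
  have htend := ENNReal.tendsto_pow_atTop_nhds_zero_of_lt_one
    (r := (2 : ENNReal)⁻¹) (by simp [ENNReal.inv_lt_one])
  obtain ⟨n, hn⟩ := (htend.eventually (gt_mem_nhds hpos)).exists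
  have h1 : μ Gset ≤ (2 : ENNReal)⁻¹ ^ (n + 1) := key n
  have h2 : ((2 : ENNReal)⁻¹) ^ (n + 1) ≤ (2 : ENNReal)⁻¹ ^ n :=
    pow_le_pow_of_le_one (by norm_num) (by norm_num) (by omega)
  exact absurd (lt_of_le_of_lt (h1.trans h2) hn) (lt_irrefl _)
/-! ### Clopen codes -/

def Code : Type := Σ m : ℕ, Set ((i : Fin m) → ZMod 2)

instance : Countable Code := by unfold Code; infer_instance

instance : Nonempty Code := ⟨⟨0, ∅⟩⟩

def decode (c : Code) : Set Cantor := {x | (fun i : Fin c.1 => x i.1) ∈ c.2}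

lemma decode_agree {c : Code} {x y : Cantor} (h : ∀ i < c.1, x i = y i) :
    x ∈ decode c ↔ y ∈ decode c := by
  have : (fun i : Fin c.1 => x i.1) = (fun i : Fin c.1 => y i.1) := by
    funext i; exact h i.1 i.2
  simp only [decode, Set.mem_setOf_eq, this]

/-- Every point of an open set has a cylinder neighborhood inside it. -/
lemma exists_cyl_subset {U : Set Cantor} (hU : IsOpen U) {x : Cantor} (hx : x ∈ U) :
    ∃ m : ℕ, ∀ y : Cantor, (∀ i < m, y i = x i) → y ∈ U := by
  obtain ⟨I, u, h1, h2⟩ := isOpen_pi_iff.mp hU x hx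
  classical
  refine ⟨if h : I.Nonempty then I.max' h + 1 else 0, fun y hy => h2 ?_⟩
  intro a ha
  have ham : a < (if h : I.Nonempty then I.max' h + 1 else 0) := by
    rw [dif_pos ⟨a, ha⟩]
    exact Nat.lt_succ_of_le (Finset.le_max' _ _ ha)
  rw [hy a ham]
  exact (h1 a ha).2

/-- Every finite subset of an open set is contained in a coded clopen set inside it. -/
lemma exists_code_between {U : Set Cantor} (hU : IsOpen U) (F : Finset Cantor)
    (hF : ↑F ⊆ U) : ∃ c : Code, ↑F ⊆ decode c ∧ decode c ⊆ U := by
  classical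
  have hm : ∀ x : Cantor, x ∈ F → ∃ m : ℕ, ∀ y : Cantor, (∀ i < m, y i = x i) → y ∈ U :=
    fun x hx => exists_cyl_subset hU (hF hx)
  choose! mf hmf using hm
  set m : ℕ := F.sup mf with hmdef
  refine ⟨⟨m, (fun (x : Cantor) (i : Fin m) => x i.1) '' ↑F⟩, ?_, ?_⟩
  · intro x hx
    exact Set.mem_image_of_mem _ hx
  · rintro y ⟨x, hxF, hxy⟩
    have hagree : ∀ i < m, y i = x i := by
      intro i hi
      have := congrFun hxy ⟨i, hi⟩
      exact this.symm
    exact hmf x hxF y (fun i hi => hagree i (lt_of_lt_of_le hi (Finset.le_sup hxF)))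

/-! ### The eventually-one points -/

def Oneset : Set Cantor := {x | ∀ᶠ n in atTop, x n = 1}

lemma Oneset_countable : Oneset.Countable := by
  have : Oneset = ⋃ m : ℕ, {x : Cantor | ∀ n, m ≤ n → x n = 1} := by
    ext x
    simp only [Oneset, Filter.eventually_atTop, Set.mem_setOf_eq, Set.mem_iUnion]
  rw [this]
  refine Set.countable_iUnion (fun m => Set.Finite.countable ?_)
  have : Set.Finite ((fun (x : Cantor) (i : Fin m) => x i.1) ''
      {x : Cantor | ∀ n, m ≤ n → x n = 1}) := Set.toFinite _
  refine Set.Finite.of_finite_image this ?_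
  intro x hx y hy hxy
  funext n
  by_cases hn : m ≤ n
  · rw [hx n hn, hy n hn]
  · exact congrFun hxy ⟨n, by omega⟩

lemma one_mem_Oneset : (fun _ => (1 : ZMod 2)) ∈ Oneset := by
  simp [Oneset]

/-! ### Pseudo-intersection helper -/

lemma hp_pseudo (hp : PseudoIntersectionNumberEqContinuum) {ι : Type} (𝒜 : ι → Set ℕ)
    (hcard : Cardinal.mk ι < Cardinal.continuum)
    (hinf : ∀ i, (𝒜 i).Infinite)
    (hFIP : ∀ s : Finset ι, (⋂ i ∈ s, 𝒜 i).Infinite) :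
    ∃ A : Set ℕ, A.Infinite ∧ ∀ i, (A \ 𝒜 i).Finite := by
  classical
  have h1 : Cardinal.mk (Set.range 𝒜) < 2 ^ Cardinal.aleph0 := by
    rw [Cardinal.two_power_aleph0]
    exact lt_of_le_of_lt Cardinal.mk_range_le hcard
  obtain ⟨A, hAinf, hA⟩ := hp (Set.range 𝒜) h1
    (by rintro B ⟨i, rfl⟩; exact hinf i)
    (by
      intro G hG
      have : ∀ B : {B // B ∈ G}, ∃ i : ι, 𝒜 i = B.1 := fun B => hG B.2
      choose fI hfI using this
      have hsub : (⋂ i ∈ G.attach.image fI, 𝒜 i) ⊆ ⋂₀ (G : Set (Set ℕ)) := by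
        intro x hx B hB
        have hfi : fI ⟨B, hB⟩ ∈ G.attach.image fI :=
          Finset.mem_image_of_mem _ (Finset.mem_attach _ _)
        have := Set.mem_iInter₂.mp hx (fI ⟨B, hB⟩) hfi
        rwa [hfI ⟨B, hB⟩] at this
      exact Set.Infinite.mono hsub (hFIP _))
  exact ⟨A, hAinf, fun i => hA (𝒜 i) ⟨i, rfl⟩⟩

/-! ### The index type and enumerations -/

noncomputable def σω : Type := (Cardinal.continuum.ord).ToType

noncomputable instance : LinearOrder σω := by unfold σω; infer_instance
instance : WellFoundedLT σω := by unfold σω; infer_instance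

lemma σω_mk : Cardinal.mk σω = Cardinal.continuum := Cardinal.mk_ord_toType _

lemma σω_Iio_small (b : σω) : Cardinal.mk {δ : σω // δ < b} < Cardinal.continuum := by
  have := Cardinal.mk_Iio_ord_toType (c := Cardinal.continuum) b
  convert this using 2
  rfl

lemma Cantor_mk : Cardinal.mk Cantor = Cardinal.continuum := by
  rw [← Cardinal.two_power_aleph0]; simp [Cardinal.mk_arrow]

lemma exists_surj_Cantor : ∃ e : σω → Cantor, Function.Surjective e := by
  have : Cardinal.mk σω = Cardinal.mk Cantor := by rw [σω_mk, Cantor_mk]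
  obtain ⟨f⟩ := Cardinal.eq.mp this
  exact ⟨f, f.surjective⟩

lemma exists_surj_CodeSeq : ∃ f : σω → (ℕ → Code), Function.Surjective f := by
  have hle : Cardinal.mk (ℕ → Code) ≤ Cardinal.mk σω := by
    rw [σω_mk]
    calc Cardinal.mk (ℕ → Code) = Cardinal.mk Code ^ Cardinal.aleph0 := by
          rw [← Cardinal.power_def, Cardinal.mk_nat]
      _ ≤ (2 ^ Cardinal.aleph0) ^ Cardinal.aleph0 := by
          apply Cardinal.power_le_power_right
          exact le_trans Cardinal.mk_le_aleph0 (Cardinal.aleph0_le_continuum.trans_eq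
            Cardinal.two_power_aleph0.symm)
      _ = Cardinal.continuum := by
          rw [← Cardinal.power_mul, Cardinal.aleph0_mul_aleph0, Cardinal.two_power_aleph0]
  obtain ⟨emb⟩ := Cardinal.le_def _ _ |>.mp hle
  exact ⟨Function.invFun emb, Function.invFun_surjective emb.injective⟩
/-! ### The transfinite construction -/

open scoped Classical

noncomputable def eenum : σω → Cantor := exists_surj_Cantor.choose

lemma eenum_surj : Function.Surjective eenum := exists_surj_Cantor.choose_spec

noncomputable def fenum : σω → (ℕ → Code) := exists_surj_CodeSeq.choose

lemma fenum_surj : Function.Surjective fenum := exists_surj_CodeSeq.choose_spec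

/-- The data constructed at each stage. -/
structure St where
  z : Cantor
  B : Set ℕ
  b : ℕ → ℕ
  P : ℕ → ℕ
  g : ℕ → ℕ
  Free : Set ℕ
  A : Set ℕ

instance : Inhabited St := ⟨⟨fun _ => 1, Set.univ, id, id, id, Set.univ, Set.univ⟩⟩

/-- The part of `X` built before stage `β`. -/
def XP (prev : σω → St) (β : σω) : Set Cantor :=
  Oneset ∪ (fun δ => (prev δ).z) '' (Set.Iio β)

/-- Stage `β` is active: the β-th clopen sequence is an `ω`-cover with infinite
index sets over the part of `X` built so far. -/
def ActP (prev : σω → St) (β : σω) : Prop :=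
  ∀ F : Finset Cantor, ↑F ⊆ XP prev β → {n : ℕ | ↑F ⊆ decode (fenum β n)}.Infinite

def ΓProp (prev : σω → St) (β : σω) (Γ : Set ℕ) : Prop :=
  Γ.Infinite ∧ ∀ δ, δ < β → ActP prev δ → (Γ \ (prev δ).Free).Finite

noncomputable def pickΓ (prev : σω → St) (β : σω) : Set ℕ :=
  if h : ∃ Γ, ΓProp prev β Γ then h.choose else Set.univ

def BProp (prev : σω → St) (β : σω) (B : Set ℕ) : Prop :=
  B.Infinite ∧ ∀ x ∈ XP prev β, (B \ {n | x ∈ decode (fenum β n)}).Finite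

noncomputable def pickB (prev : σω → St) (β : σω) : Set ℕ :=
  if h : ∃ B, BProp prev β B then h.choose else Set.univ

def AProp (prev : σω → St) (β : σω) (Free : Set ℕ) (A : Set ℕ) : Prop :=
  A.Infinite ∧ (ActP prev β → (A \ Free).Finite) ∧
    ∀ δ, δ < β → ActP prev δ → (A \ (prev δ).Free).Finite

noncomputable def pickA (prev : σω → St) (β : σω) (Free : Set ℕ) : Set ℕ :=
  if h : ∃ A, AProp prev β Free A then h.choose else Set.univ

/-- Threshold after which `d` belongs to all members of the cover along `B`. -/
noncomputable def kTh (V : ℕ → Code) (B : Set ℕ) (d : Cantor) : ℕ :=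
  sInf {k | ∀ n, n ∈ B → k ≤ n → d ∈ decode (V n)}

/-- Points which are `1` beyond `P` except on the block `g`. -/
def ESet (P g : ℕ) : Set Cantor :=
  {d | ∀ i, P ≤ i → i ∉ Set.Ico (kseq g) (kseq (g + 1)) → d i = 1}

noncomputable def KTh (V : ℕ → Code) (B : Set ℕ) (P g : ℕ) : ℕ :=
  sSup (kTh V B '' ESet P g)

/-- Least element of `Γ` whose block starts at or after coordinate `P`. -/
noncomputable def gsel (Γ : Set ℕ) (P : ℕ) : ℕ := sInf {m | m ∈ Γ ∧ P ≤ kseq m}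

/-- The recursion selecting the γ-subsequence `b j` and the scales `P j`. -/
noncomputable def jrec (V : ℕ → Code) (B Γ : Set ℕ) : ℕ → ℕ × ℕ
  | 0 => (sInf B, 0)
  | j + 1 =>
    let p := jrec V B Γ j
    let g := gsel Γ p.2
    let b' := sInf {n | n ∈ B ∧ p.1 < n ∧ KTh V B p.2 g ≤ n}
    (b', max (max ((V b').1) (kseq (g + 1))) (p.2 + 1))

/-- One step of the construction. -/
noncomputable def step (prev : σω → St) (β : σω) : St :=
  { z := fun i =>
      if ∃ m ∈ pickA prev β
          (Set.range fun j => gsel (pickΓ prev β) ((jrec (fenum β) (pickB prev β) (pickΓ prev β) j).2)),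
          i ∈ Set.Ico (kseq m) (kseq (m + 1))
        then eenum β i else 1
    B := pickB prev β
    b := fun j => (jrec (fenum β) (pickB prev β) (pickΓ prev β) j).1
    P := fun j => (jrec (fenum β) (pickB prev β) (pickΓ prev β) j).2
    g := fun j => gsel (pickΓ prev β) ((jrec (fenum β) (pickB prev β) (pickΓ prev β) j).2)
    Free := Set.range fun j => gsel (pickΓ prev β) ((jrec (fenum β) (pickB prev β) (pickΓ prev β) j).2)
    A := pickA prev β
      (Set.range fun j => gsel (pickΓ prev β) ((jrec (fenum β) (pickB prev β) (pickΓ prev β) j).2)) }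

section congr

variable {prev prev' : σω → St} {β : σω}

lemma XP_congr (h : ∀ δ, δ < β → prev δ = prev' δ) : XP prev β = XP prev' β := by
  unfold XP
  congr 1
  exact Set.image_congr fun δ hδ => by rw [h δ hδ]

lemma ActP_congr (h : ∀ δ, δ < β → prev δ = prev' δ) : ActP prev β ↔ ActP prev' β := by
  unfold ActP
  rw [XP_congr h]

lemma ΓProp_congr (h : ∀ δ, δ < β → prev δ = prev' δ) (Γ : Set ℕ) :
    ΓProp prev β Γ ↔ ΓProp prev' β Γ := by
  unfold ΓProp
  constructor <;> rintro ⟨h1, h2⟩ <;> refine ⟨h1, fun δ hδ hact => ?_⟩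
  · rw [← h δ hδ]
    exact h2 δ hδ ((ActP_congr fun δ' hδ' => h δ' (hδ'.trans hδ)).mpr hact)
  · rw [h δ hδ]
    exact h2 δ hδ ((ActP_congr fun δ' hδ' => h δ' (hδ'.trans hδ)).mp hact)

lemma pickΓ_congr (h : ∀ δ, δ < β → prev δ = prev' δ) : pickΓ prev β = pickΓ prev' β := by
  unfold pickΓ
  have he : ΓProp prev β = ΓProp prev' β := funext fun Γ => propext (ΓProp_congr h Γ)
  simp only [he]

lemma BProp_congr (h : ∀ δ, δ < β → prev δ = prev' δ) (B : Set ℕ) :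
    BProp prev β B ↔ BProp prev' β B := by
  unfold BProp
  rw [XP_congr h]

lemma pickB_congr (h : ∀ δ, δ < β → prev δ = prev' δ) : pickB prev β = pickB prev' β := by
  unfold pickB
  have he : BProp prev β = BProp prev' β := funext fun B => propext (BProp_congr h B)
  simp only [he]

lemma AProp_congr (h : ∀ δ, δ < β → prev δ = prev' δ) (Free A : Set ℕ) :
    AProp prev β Free A ↔ AProp prev' β Free A := by
  unfold AProp
  rw [ActP_congr h]
  constructor <;> rintro ⟨h1, h2, h3⟩ <;> refine ⟨h1, h2, fun δ hδ hact => ?_⟩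
  · rw [← h δ hδ]
    exact h3 δ hδ ((ActP_congr fun δ' hδ' => h δ' (hδ'.trans hδ)).mpr hact)
  · rw [h δ hδ]
    exact h3 δ hδ ((ActP_congr fun δ' hδ' => h δ' (hδ'.trans hδ)).mp hact)

lemma pickA_congr (h : ∀ δ, δ < β → prev δ = prev' δ) (Free : Set ℕ) :
    pickA prev β Free = pickA prev' β Free := by
  unfold pickA
  have he : AProp prev β Free = AProp prev' β Free := funext fun A => propext (AProp_congr h Free A)
  simp only [he]

lemma step_congr (h : ∀ δ, δ < β → prev δ = prev' δ) : step prev β = step prev' β := by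
  unfold step
  rw [pickΓ_congr h, pickB_congr h, pickA_congr h]

end congr

noncomputable def dat : σω → St :=
  (IsWellFounded.wf (r := ((· < ·) : σω → σω → Prop))).fix
    (fun β ih => step (fun δ => if h : δ < β then ih δ h else default) β)

lemma dat_eq (β : σω) : dat β = step dat β := by
  have h := (IsWellFounded.wf (r := ((· < ·) : σω → σω → Prop))).fix_eq
    (fun β ih => step (fun δ => if h : δ < β then ih δ h else default) β) β
  unfold dat
  rw [h]
  exact step_congr fun δ hδ => by rw [dif_pos hδ]
/-! ### Global stage objects -/

noncomputable def Γf (β : σω) : Set ℕ := pickΓ dat β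
noncomputable def Bf (β : σω) : Set ℕ := pickB dat β
noncomputable def bf (β : σω) (j : ℕ) : ℕ := (jrec (fenum β) (Bf β) (Γf β) j).1
noncomputable def Pf (β : σω) (j : ℕ) : ℕ := (jrec (fenum β) (Bf β) (Γf β) j).2
noncomputable def gf (β : σω) (j : ℕ) : ℕ := gsel (Γf β) (Pf β j)
noncomputable def Freef (β : σω) : Set ℕ := Set.range (gf β)
noncomputable def Af (β : σω) : Set ℕ := pickA dat β (Freef β)
noncomputable def zf (β : σω) : Cantor := fun i =>
  if ∃ m ∈ Af β, i ∈ Set.Ico (kseq m) (kseq (m + 1)) then eenum β i else 1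

def Act (β : σω) : Prop := ActP dat β
def Xst (β : σω) : Set Cantor := XP dat β

lemma dat_z (β : σω) : (dat β).z = zf β := by
  rw [dat_eq]
  rfl

lemma dat_Free (β : σω) : (dat β).Free = Freef β := by
  rw [dat_eq]
  rfl

/-! ### Specs of the choices -/

lemma Γf_spec (β : σω) (h : ∃ Γ, ΓProp dat β Γ) : ΓProp dat β (Γf β) := by
  unfold Γf pickΓ
  rw [dif_pos h]
  exact h.choose_spec

lemma Bf_spec (β : σω) (h : ∃ B, BProp dat β B) : BProp dat β (Bf β) := by
  unfold Bf pickB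
  rw [dif_pos h]
  exact h.choose_spec

lemma Af_spec (β : σω) (h : ∃ A, AProp dat β (Freef β) A) : AProp dat β (Freef β) (Af β) := by
  unfold Af pickA
  rw [dif_pos h]
  exact h.choose_spec

/-! ### Properties of `kTh`, `KTh`, `ESet`, `gsel`, `jrec` -/

lemma kTh_spec {V : ℕ → Code} {B : Set ℕ} {d : Cantor}
    (hfin : (B \ {n | d ∈ decode (V n)}).Finite) :
    ∀ n, n ∈ B → kTh V B d ≤ n → d ∈ decode (V n) := by
  have hne : {k | ∀ n, n ∈ B → k ≤ n → d ∈ decode (V n)}.Nonempty := by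
    obtain ⟨N, hN⟩ := hfin.bddAbove
    refine ⟨N + 1, fun n hn hkn => ?_⟩
    by_contra hmem
    exact absurd (hN ⟨hn, hmem⟩) (by omega)
  exact Nat.sInf_mem hne

lemma ESet_finite (P g : ℕ) : (ESet P g).Finite := by
  set L := max P (kseq (g + 1)) with hL
  have himg : Set.Finite ((fun (x : Cantor) (i : Fin L) => x i.1) '' ESet P g) := Set.toFinite _
  refine Set.Finite.of_finite_image himg ?_
  intro x hx y hy hxy
  funext i
  by_cases hi : i < L
  · exact congrFun hxy ⟨i, hi⟩
  · have hiP : P ≤ i := by omega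
    have hiblock : i ∉ Set.Ico (kseq g) (kseq (g + 1)) := by
      rintro ⟨_, h2⟩
      omega
    rw [hx i hiP hiblock, hy i hiP hiblock]

lemma ESet_subset_Oneset (P g : ℕ) : ESet P g ⊆ Oneset := by
  intro d hd
  rw [Oneset, Set.mem_setOf_eq, Filter.eventually_atTop]
  refine ⟨max P (kseq (g + 1)), fun i hi => ?_⟩
  refine hd i (by omega) ?_
  rintro ⟨_, h2⟩
  omega

lemma KTh_ge {V : ℕ → Code} {B : Set ℕ} {P g : ℕ} {d : Cantor} (hd : d ∈ ESet P g) :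
    kTh V B d ≤ KTh V B P g :=
  le_csSup ((ESet_finite P g).image _).bddAbove (Set.mem_image_of_mem _ hd)

lemma kseq_ge (m : ℕ) : m + 1 ≤ kseq m := by
  have := Nat.lt_two_pow_self (n := m + 1)
  simp only [kseq]
  omega

lemma gsel_spec {Γ : Set ℕ} (hΓ : Γ.Infinite) (P : ℕ) :
    gsel Γ P ∈ Γ ∧ P ≤ kseq (gsel Γ P) := by
  have hne : {m | m ∈ Γ ∧ P ≤ kseq m}.Nonempty := by
    obtain ⟨m, hm, hmP⟩ := hΓ.exists_gt P
    exact ⟨m, hm, le_trans (by omega) (kseq_ge m)⟩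
  exact Nat.sInf_mem hne

section jrecSpec

variable {β : σω}

lemma Pf_succ (j : ℕ) :
    Pf β (j + 1) = max (max ((fenum β (bf β (j + 1))).1) (kseq (gf β j + 1))) (Pf β j + 1) := by
  show (jrec (fenum β) (Bf β) (Γf β) (j + 1)).2 = _
  rw [jrec]
  rfl

lemma bf_succ (j : ℕ) :
    bf β (j + 1) =
      sInf {n | n ∈ Bf β ∧ bf β j < n ∧ KTh (fenum β) (Bf β) (Pf β j) (gf β j) ≤ n} := by
  show (jrec (fenum β) (Bf β) (Γf β) (j + 1)).1 = _
  rw [jrec]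
  rfl

lemma Pf_lt_succ (j : ℕ) : Pf β j < Pf β (j + 1) := by
  rw [Pf_succ]
  omega

lemma Pf_mono : StrictMono (Pf β) := strictMono_nat_of_lt_succ Pf_lt_succ

lemma codim_le_Pf (j : ℕ) : (fenum β (bf β (j + 1))).1 ≤ Pf β (j + 1) := by
  rw [Pf_succ]
  omega

lemma kseq_gf_le_Pf (j : ℕ) : kseq (gf β j + 1) ≤ Pf β (j + 1) := by
  rw [Pf_succ]
  omega

lemma bf_mem_and_mono (hB : (Bf β).Infinite) (j : ℕ) :
    bf β j ∈ Bf β ∧ bf β j < bf β (j + 1) ∧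
      KTh (fenum β) (Bf β) (Pf β j) (gf β j) ≤ bf β (j + 1) := by
  have hbase : ∀ i : ℕ,
      bf β (i + 1) ∈ {n | n ∈ Bf β ∧ bf β i < n ∧
        KTh (fenum β) (Bf β) (Pf β i) (gf β i) ≤ n} := by
    intro i
    rw [bf_succ]
    apply Nat.sInf_mem
    obtain ⟨n, hn, hgt⟩ := hB.exists_gt (max (bf β i) (KTh (fenum β) (Bf β) (Pf β i) (gf β i)))
    exact ⟨n, hn, by omega, by omega⟩
  refine ⟨?_, (hbase j).2.1, (hbase j).2.2⟩
  cases j with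
  | zero =>
    show sInf (Bf β) ∈ Bf β
    exact Nat.sInf_mem hB.nonempty
  | succ i => exact (hbase i).1

lemma bf_strictMono (hB : (Bf β).Infinite) : StrictMono (bf β) :=
  strictMono_nat_of_lt_succ fun j => (bf_mem_and_mono hB j).2.1

lemma gf_mem (hΓ : (Γf β).Infinite) (j : ℕ) : gf β j ∈ Γf β ∧ Pf β j ≤ kseq (gf β j) :=
  gsel_spec hΓ _

lemma gf_strictMono (hΓ : (Γf β).Infinite) : StrictMono (gf β) := by
  apply strictMono_nat_of_lt_succ
  intro j
  have h1 : kseq (gf β j + 1) ≤ Pf β (j + 1) := kseq_gf_le_Pf j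
  have h2 : Pf β (j + 1) ≤ kseq (gf β (j + 1)) := (gf_mem hΓ (j + 1)).2
  have := kseq_strictMono.le_iff_le.mp (h1.trans h2)
  omega

lemma Freef_infinite (hΓ : (Γf β).Infinite) : (Freef β).Infinite :=
  Set.infinite_range_of_injective (gf_strictMono hΓ).injective

lemma block_gf_subset (hΓ : (Γf β).Infinite) (j : ℕ) :
    Set.Ico (kseq (gf β j)) (kseq (gf β j + 1)) ⊆ Set.Ico (Pf β j) (Pf β (j + 1)) := by
  intro i hi
  rcases hi with ⟨h1, h2⟩
  have h3 := (gf_mem hΓ j).2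
  have h4 := kseq_gf_le_Pf (β := β) j
  exact ⟨by omega, by omega⟩

end jrecSpec
/-! ### Existence of the choices, via `𝔭 = 𝔠` -/

lemma Xst_small (β : σω) : Cardinal.mk (Xst β) < Cardinal.continuum := by
  have h1 : Cardinal.mk (Xst β) ≤
      Cardinal.mk Oneset + Cardinal.mk ((fun δ => (dat δ).z) '' (Set.Iio β)) :=
    Cardinal.mk_union_le _ _
  have h2 : Cardinal.mk Oneset ≤ Cardinal.aleph0 := by
    have := Oneset_countable
    rw [← Set.countable_coe_iff] at this
    exact Cardinal.mk_le_aleph0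
  have h3 : Cardinal.mk ((fun δ => (dat δ).z) '' (Set.Iio β)) < Cardinal.continuum := by
    refine lt_of_le_of_lt (Cardinal.mk_image_le) ?_
    exact σω_Iio_small β
  exact lt_of_le_of_lt h1 (Cardinal.add_lt_of_lt Cardinal.aleph0_le_continuum
    (lt_of_le_of_lt h2 Cardinal.aleph0_lt_continuum) h3)

lemma BEx (hp : PseudoIntersectionNumberEqContinuum) {β : σω} (hAct : Act β) :
    ∃ B, BProp dat β B := by
  obtain ⟨A, hAinf, hA⟩ := hp_pseudo hp (ι := Xst β)
    (fun x => {n | (x : Cantor) ∈ decode (fenum β n)}) (Xst_small β)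
    (by
      intro x
      have h := hAct {(x : Cantor)} (by rw [Finset.coe_singleton, Set.singleton_subset_iff]; exact x.2)
      refine h.mono ?_
      intro n hn
      simpa using hn (Finset.mem_coe.mpr (Finset.mem_singleton_self _)))
    (by
      intro s
      have hsub : ↑(s.image (fun x : Xst β => (x : Cantor))) ⊆ Xst β := by
        intro y hy
        simp only [Finset.coe_image, Set.mem_image, Finset.mem_coe] at hy
        obtain ⟨x, _, rfl⟩ := hy
        exact x.2
      refine (hAct _ hsub).mono ?_
      intro n hn
      refine Set.mem_iInter₂.mpr fun x hx => ?_
      exact hn (by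
        simp only [Finset.coe_image, Set.mem_image, Finset.mem_coe]
        exact ⟨x, hx, rfl⟩))
  refine ⟨A, hAinf, fun x hx => hA ⟨x, hx⟩⟩

lemma ΓEx (hp : PseudoIntersectionNumberEqContinuum) : ∀ β : σω, ∃ Γ, ΓProp dat β Γ := by
  intro β
  induction β using WellFoundedLT.induction with
  | ind β ih =>
  classical
  obtain ⟨A, hAinf, hA⟩ := hp_pseudo hp (ι := {δ : σω // δ < β ∧ ActP dat δ})
    (fun δ => (dat δ.1).Free)
    (lt_of_le_of_lt
      (Cardinal.mk_le_of_injective (f := fun x : {δ : σω // δ < β ∧ ActP dat δ} =>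
        (⟨x.1, x.2.1⟩ : {δ : σω // δ < β})) (by
          intro a b hab
          exact Subtype.ext (Subtype.mk_eq_mk.mp hab)))
      (σω_Iio_small β))
    (by
      intro δ
      show ((dat δ.1).Free).Infinite
      rw [dat_Free]
      exact Freef_infinite (Γf_spec δ.1 (ih δ.1 δ.2.1)).1)
    (by
      intro s
      rcases s.eq_empty_or_nonempty with hs | hs
      · subst hs
        simp only [Finset.notMem_empty, Set.iInter_of_empty, Set.iInter_univ]
        exact Set.infinite_univ
      · set δs := s.max' hs with hδs
        have hΓs : (Γf δs.1).Infinite := (Γf_spec δs.1 (ih δs.1 δs.2.1)).1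
        have hsub : (Freef δs.1) \ (⋃ δ ∈ s.erase δs, ((Γf δs.1) \ (dat δ.1).Free)) ⊆
            ⋂ δ ∈ s, (dat δ.1).Free := by
          rintro n ⟨hn1, hn2⟩
          refine Set.mem_iInter₂.mpr fun δ hδ => ?_
          by_cases hδeq : δ = δs
          · subst hδeq
            rw [dat_Free]
            exact hn1
          · have hδer : δ ∈ s.erase δs := Finset.mem_erase.mpr ⟨hδeq, hδ⟩
            have hnΓ : n ∈ Γf δs.1 := by
              obtain ⟨j, hj⟩ := hn1
              rw [← hj]
              exact (gf_mem hΓs j).1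
            by_contra hnF
            exact hn2 (Set.mem_biUnion hδer ⟨hnΓ, hnF⟩)
        refine Set.Infinite.mono hsub ?_
        refine Set.Infinite.diff (Freef_infinite hΓs) ?_
        refine Set.Finite.biUnion (s.erase δs).finite_toSet ?_
        intro δ hδ
        have hδmem := Finset.mem_of_mem_erase hδ
        have hδne := Finset.ne_of_mem_erase hδ
        have hδle : δ ≤ δs := Finset.le_max' s δ hδmem
        have hδlt : δ.1 < δs.1 := lt_of_le_of_ne hδle (fun h => hδne (Subtype.ext h))
        exact (Γf_spec δs.1 (ih δs.1 δs.2.1)).2 δ.1 hδlt δ.2.2)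
  refine ⟨A, hAinf, fun δ hδ hact => hA ⟨δ, hδ, hact⟩⟩
lemma AEx (hp : PseudoIntersectionNumberEqContinuum) (β : σω) :
    ∃ A, AProp dat β (Freef β) A := by
  classical
  obtain ⟨A, hAinf, hA⟩ := hp_pseudo hp (ι := {δ : σω // δ ≤ β ∧ ActP dat δ})
    (fun δ => Freef δ.1)
    (by
      refine lt_of_le_of_lt (Cardinal.mk_le_of_injective
        (f := fun x : {δ : σω // δ ≤ β ∧ ActP dat δ} =>
          if h : x.1 < β then (some ⟨x.1, h⟩ : Option {δ : σω // δ < β}) else none) ?_) ?_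
      · intro a b hab
        simp only at hab
        by_cases ha : a.1 < β <;> by_cases hb : b.1 < β
        · rw [dif_pos ha, dif_pos hb] at hab
          exact Subtype.ext (Subtype.mk_eq_mk.mp (Option.some_injective _ hab))
        · rw [dif_pos ha, dif_neg hb] at hab; exact absurd hab (Option.some_ne_none _)
        · rw [dif_neg ha, dif_pos hb] at hab; exact absurd hab.symm (Option.some_ne_none _)
        · have ha' : a.1 = β := le_antisymm a.2.1 (not_lt.mp ha)
          have hb' : b.1 = β := le_antisymm b.2.1 (not_lt.mp hb)
          exact Subtype.ext (ha'.trans hb'.symm)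
      · rw [Cardinal.mk_option]
        exact Cardinal.add_lt_of_lt Cardinal.aleph0_le_continuum (σω_Iio_small β)
          (lt_of_lt_of_le Cardinal.one_lt_aleph0 Cardinal.aleph0_le_continuum))
    (fun δ => Freef_infinite (Γf_spec δ.1 (ΓEx hp δ.1)).1)
    (by
      intro s
      rcases s.eq_empty_or_nonempty with hs | hs
      · subst hs
        simp only [Finset.notMem_empty, Set.iInter_of_empty, Set.iInter_univ]
        exact Set.infinite_univ
      · set δs := s.max' hs with hδs
        have hΓs : (Γf δs.1).Infinite := (Γf_spec δs.1 (ΓEx hp δs.1)).1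
        have hsub : (Freef δs.1) \ (⋃ δ ∈ s.erase δs, ((Γf δs.1) \ Freef δ.1)) ⊆
            ⋂ δ ∈ s, Freef δ.1 := by
          rintro n ⟨hn1, hn2⟩
          refine Set.mem_iInter₂.mpr fun δ hδ => ?_
          by_cases hδeq : δ = δs
          · subst hδeq; exact hn1
          · have hδer : δ ∈ s.erase δs := Finset.mem_erase.mpr ⟨hδeq, hδ⟩
            have hnΓ : n ∈ Γf δs.1 := by
              obtain ⟨j, hj⟩ := hn1
              rw [← hj]
              exact (gf_mem hΓs j).1
            by_contra hnF
            exact hn2 (Set.mem_biUnion hδer ⟨hnΓ, hnF⟩)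
        refine Set.Infinite.mono hsub ?_
        refine Set.Infinite.diff (Freef_infinite hΓs) ?_
        refine Set.Finite.biUnion (s.erase δs).finite_toSet ?_
        intro δ hδ
        have hδmem := Finset.mem_of_mem_erase hδ
        have hδne := Finset.ne_of_mem_erase hδ
        have hδle : δ ≤ δs := Finset.le_max' s δ hδmem
        have hδlt : δ.1 < δs.1 := lt_of_le_of_ne hδle (fun h => hδne (Subtype.ext h))
        have := (Γf_spec δs.1 (ΓEx hp δs.1)).2 δ.1 hδlt δ.2.2
        rwa [dat_Free] at this)
  refine ⟨A, hAinf, fun hact => hA ⟨β, le_refl β, hact⟩, fun δ hδ hact => ?_⟩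
  rw [dat_Free]
  exact hA ⟨δ, le_of_lt hδ, hact⟩

/-! ### Bundled properties -/

lemma Bf_inf (hp : PseudoIntersectionNumberEqContinuum) {β : σω} (hAct : Act β) :
    (Bf β).Infinite := (Bf_spec β (BEx hp hAct)).1

lemma Bf_tail (hp : PseudoIntersectionNumberEqContinuum) {β : σω} (hAct : Act β)
    {x : Cantor} (hx : x ∈ Xst β) : ((Bf β) \ {n | x ∈ decode (fenum β n)}).Finite :=
  (Bf_spec β (BEx hp hAct)).2 x hx

lemma Γf_inf (hp : PseudoIntersectionNumberEqContinuum) (β : σω) : (Γf β).Infinite :=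
  (Γf_spec β (ΓEx hp β)).1

lemma Af_inf (hp : PseudoIntersectionNumberEqContinuum) (β : σω) : (Af β).Infinite :=
  (Af_spec β (AEx hp β)).1

lemma Af_commit (hp : PseudoIntersectionNumberEqContinuum) {β γ : σω} (hβγ : β ≤ γ)
    (hAct : Act β) : ((Af γ) \ Freef β).Finite := by
  rcases lt_or_eq_of_le hβγ with h | h
  · have := (Af_spec γ (AEx hp γ)).2.2 β h hAct
    rwa [dat_Free] at this
  · subst h
    exact (Af_spec β (AEx hp β)).2.1 hAct

/-! ### The point added at each stage -/

lemma zf_on_block {β : σω} {m : ℕ} (hm : m ∈ Af β) {i : ℕ}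
    (hi : i ∈ Set.Ico (kseq m) (kseq (m + 1))) : zf β i = eenum β i := by
  unfold zf
  rw [if_pos ⟨m, hm, hi⟩]

lemma zf_off {β : σω} {i : ℕ} (h : ∀ m ∈ Af β, i ∉ Set.Ico (kseq m) (kseq (m + 1))) :
    zf β i = 1 := by
  unfold zf
  rw [if_neg]
  rintro ⟨m, hm, hi⟩
  exact h m hm hi
/-! ### The stage verification -/

lemma mem_tail (hp : PseudoIntersectionNumberEqContinuum) {β : σω} (hAct : Act β)
    {x : Cantor} (hx : x ∈ Xst β) :
    ∀ᶠ j in Filter.atTop, x ∈ decode (fenum β (bf β j)) := by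
  have hB := Bf_inf hp hAct
  obtain ⟨N, hN⟩ := (Bf_tail hp hAct hx).bddAbove
  rw [Filter.eventually_atTop]
  refine ⟨N + 1, fun j hj => ?_⟩
  by_contra hmem
  have h1 : bf β j ∈ Bf β \ {n | x ∈ decode (fenum β n)} := ⟨(bf_mem_and_mono hB j).1, hmem⟩
  have h2 : bf β j ≤ N := hN h1
  have h3 : j ≤ bf β j := (bf_strictMono hB).le_apply
  omega

lemma mem_commit (hp : PseudoIntersectionNumberEqContinuum) {β γ : σω} (hβγ : β ≤ γ)
    (hAct : Act β) :
    ∀ᶠ j in Filter.atTop, zf γ ∈ decode (fenum β (bf β j)) := by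
  classical
  have hB := Bf_inf hp hAct
  have hΓ := Γf_inf hp β
  obtain ⟨M₀, hM₀⟩ := (Af_commit hp hβγ hAct).bddAbove
  set J₀ := kseq (M₀ + 1) with hJ₀
  have main : ∀ j, J₀ ≤ j → zf γ ∈ decode (fenum β (bf β (j + 1))) := by
    intro j hjJ
    set P := Pf β j with hP
    set g := gf β j with hg
    set d : Cantor := fun i => if i < P then zf γ i
      else if i ∈ Set.Ico (kseq g) (kseq (g + 1)) then zf γ i else 1 with hd
    have hdE : d ∈ ESet P g := by
      intro i hiP hib
      simp only [hd]
      rw [if_neg (by omega), if_neg hib]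
    have hdX : d ∈ Xst β := Set.mem_union_left _ (ESet_subset_Oneset P g hdE)
    have hkth := kTh_spec (Bf_tail hp hAct hdX)
    have hbmem := (bf_mem_and_mono hB (j + 1)).1
    have hKle := (bf_mem_and_mono hB j).2.2
    have hd_in : d ∈ decode (fenum β (bf β (j + 1))) :=
      hkth _ hbmem (le_trans (KTh_ge hdE) hKle)
    refine (decode_agree ?_).mpr hd_in
    intro i hi
    have hiP' : i < Pf β (j + 1) := lt_of_lt_of_le hi (codim_le_Pf j)
    by_cases h1 : i < P
    · simp only [hd]
      rw [if_pos h1]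
    · by_cases h2 : i ∈ Set.Ico (kseq g) (kseq (g + 1))
      · simp only [hd]
        rw [if_neg h1, if_pos h2]
      · have hd1 : d i = 1 := by
          simp only [hd]
          rw [if_neg h1, if_neg h2]
        rw [hd1]
        apply zf_off
        intro m hm hiblock
        by_cases hmF : m ∈ Freef β
        · obtain ⟨j', hj'⟩ := hmF
          have hsub := block_gf_subset hΓ j'
          rw [hj'] at hsub
          have hiw : i ∈ Set.Ico (Pf β j') (Pf β (j' + 1)) := hsub hiblock
          rcases lt_trichotomy j' j with hlt | heq | hgt
          · have hle : Pf β (j' + 1) ≤ Pf β j := Pf_mono.le_iff_le.mpr (by omega)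
            have := hiw.2
            have := not_lt.mp h1
            simp only [← hP] at hle
            omega
          · subst heq
            rw [← hj'] at hiblock
            exact h2 hiblock
          · have hle : Pf β (j + 1) ≤ Pf β j' := Pf_mono.le_iff_le.mpr (by omega)
            have := hiw.1
            omega
        · have hmM : m ≤ M₀ := hM₀ ⟨hm, hmF⟩
          have h5 : kseq (m + 1) ≤ kseq (M₀ + 1) := kseq_strictMono.le_iff_le.mpr (by omega)
          have h6 : j ≤ Pf β j := Pf_mono.le_apply
          have h7 := hiblock.2
          have h8 := not_lt.mp h1
          simp only [← hP] at h6
          omega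
  rw [Filter.eventually_atTop]
  refine ⟨J₀ + 1, fun k hk => ?_⟩
  obtain ⟨j, rfl⟩ : ∃ j, k = j + 1 := ⟨k - 1, by omega⟩
  exact main j (by omega)

lemma stage_verify (hp : PseudoIntersectionNumberEqContinuum) {β : σω} (hAct : Act β)
    {x : Cantor} (hx : x ∈ Oneset ∪ Set.range (fun γ => (dat γ).z)) :
    ∀ᶠ j in Filter.atTop, x ∈ decode (fenum β (bf β j)) := by
  rcases hx with hx | ⟨γ, rfl⟩
  · exact mem_tail hp hAct (Set.mem_union_left _ hx)
  · show ∀ᶠ j in Filter.atTop, (dat γ).z ∈ decode (fenum β (bf β j))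
    rw [dat_z]
    rcases le_or_gt β γ with h | h
    · exact mem_commit hp h hAct
    · refine mem_tail hp hAct ?_
      refine Set.mem_union_right _ ⟨γ, h, ?_⟩
      exact dat_z γ
/-! ### The final set `X` and the proof of the theorem -/

noncomputable def Xfinal : Set Cantor := Oneset ∪ Set.range (fun γ => (dat γ).z)

lemma zmod2_add_add (a b : ZMod 2) : a + (a + b) = b := by revert a b; decide

lemma zmod2_add_self (a : ZMod 2) : a + a = 0 := by revert a; decide

lemma covering (hp : PseudoIntersectionNumberEqContinuum) : Xfinal + Gset = Set.univ := by
  refine Set.eq_univ_of_forall fun w => ?_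
  obtain ⟨γ, hγ⟩ := eenum_surj w
  have hA := Af_inf hp γ
  refine Set.mem_add.mpr ⟨zf γ, ?_, zf γ + w, ?_, ?_⟩
  · exact Set.mem_union_right _ ⟨γ, dat_z γ⟩
  · refine Set.mem_iInter.mpr fun m => ?_
    obtain ⟨n, hnA, hnm⟩ := hA.exists_gt m
    refine Set.mem_iUnion₂.mpr ⟨n, hnm, ?_⟩
    intro i hi
    show zf γ i + w i = 0
    rw [zf_on_block hnA hi, hγ]
    exact zmod2_add_self _
  · funext i
    show zf γ i + (zf γ i + w i) = w i
    exact zmod2_add_add _ _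

lemma Xfinal_gamma (hp : PseudoIntersectionNumberEqContinuum) : IsGammaSet Xfinal := by
  intro J hop hcov
  classical
  set 𝒢 : Set Code := {c | ∃ U ∈ J, decode c ⊆ U} with h𝒢
  have hGne : 𝒢.Nonempty := by
    obtain ⟨U, hUJ, -⟩ := hcov ∅ (by simp)
    refine ⟨⟨0, ∅⟩, U, hUJ, ?_⟩
    rintro x hx
    exact absurd hx (by simp [decode])
  obtain ⟨g, hgr⟩ := (Set.to_countable 𝒢).exists_eq_range hGne
  set V : ℕ → Code := fun n => g (Nat.unpair n).1 with hV
  obtain ⟨β, hβ⟩ := fenum_surj V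
  have hVmem : ∀ n, V n ∈ 𝒢 := fun n => by rw [hgr]; exact ⟨_, rfl⟩
  have hU : ∀ n : ℕ, ∃ U ∈ J, decode (V n) ⊆ U := fun n => hVmem n
  choose U hUJ hUsub using hU
  have hAct : Act β := by
    intro F hF
    have hFX : ↑F ⊆ Xfinal := subset_trans hF (by
      rintro x (h | ⟨δ, _, rfl⟩)
      · exact Or.inl h
      · exact Or.inr ⟨δ, rfl⟩)
    obtain ⟨U', hU'J, hFU'⟩ := hcov F hFX
    obtain ⟨c, hFc, hcU⟩ := exists_code_between (hop U' hU'J) F hFU'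
    have hc𝒢 : c ∈ 𝒢 := ⟨U', hU'J, hcU⟩
    rw [hgr] at hc𝒢
    obtain ⟨i, hi⟩ := hc𝒢
    refine Set.Infinite.mono (s := Set.range fun k => Nat.pair i k) ?_
      (Set.infinite_range_of_injective ?_)
    · rintro n ⟨k, rfl⟩
      have h1 : fenum β (Nat.pair i k) = g i := by
        rw [hβ]
        show g (Nat.unpair (Nat.pair i k)).1 = g i
        rw [Nat.unpair_pair]
      rw [Set.mem_setOf_eq, h1, hi]
      exact hFc
    · intro k k' hk
      have := congrArg (fun n => (Nat.unpair n).2) hk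
      simpa [Nat.unpair_pair] using this
  refine ⟨fun j => U (bf β j), fun j => hUJ _, ?_⟩
  intro x hx
  obtain ⟨m, hm⟩ := Filter.eventually_atTop.mp (stage_verify hp hAct hx)
  refine Set.mem_iUnion.mpr ⟨m, ?_⟩
  refine Set.mem_iInter₂.mpr fun j hj => ?_
  refine hUsub (bf β j) ?_
  have := hm j (le_of_lt hj)
  rwa [hβ] at this

/-- **Theorem 1.** Assume `𝔭 = 2^{ℵ₀}`. Then there is a γ-set `X ⊆ 2^ω` which is not
strongly meager: there is a null set `G ⊆ 2^ω` (null for the product measure) with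
`X + G = 2^ω`. -/
theorem gammaSet_not_stronglyMeager_of_p_eq_continuum
    (hp : PseudoIntersectionNumberEqContinuum) :
    ∃ X G : Set Cantor, IsGammaSet X ∧
      (∀ μ : Measure Cantor, IsCantorProductMeasure μ → μ G = 0) ∧
      X + G = Set.univ :=
  ⟨Xfinal, Gset, Xfinal_gamma hp, fun _ hμ => Gset_null hμ, covering hp⟩
end

section
/- Let 𝒥 be an ω-cover of ℚ by open subsets of 2^ω and let x ∈ 𝒮. Then there exist a sequence (D_n)_{n∈ω} of members of 𝒥 and an element y ∈ [x]* such that ℚ ∪ [y]* ⊆ ⋃_m ⋂_{n>m} D_n. -/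
open Set MeasureTheory Filter Pointwise
open scoped ENNReal

lemma lt_kseq (n : ℕ) : n < kseq n := by
  have h : n + 1 < 2 ^ (n + 1) := Nat.lt_two_pow_self
  unfold kseq; omega

lemma cylinder_subset (U : Set Cantor) (hU : IsOpen U) (q : Cantor) (hq : q ∈ U) :
    ∃ l, ∀ z : Cantor, (∀ i < l, z i = q i) → z ∈ U := by
  obtain ⟨I, u, h1, h2⟩ := isOpen_pi_iff.mp hU q hq
  refine ⟨I.sup id + 1, fun z hz => h2 ?_⟩
  intro i hi
  rw [hz i (Nat.lt_succ_of_le (Finset.le_sup (f := id) hi))]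
  exact (h1 i hi).2

lemma support_finite (m : ℕ) : {z : Cantor | ∀ i, m ≤ i → z i = 0}.Finite := by
  classical
  have hsub : {z : Cantor | ∀ i, m ≤ i → z i = 0} ⊆
      Set.range (fun v : Fin m → ZMod 2 => (fun i => if h : i < m then v ⟨i, h⟩ else 0 : Cantor)) := by
    intro z hz
    refine ⟨fun i => z i, funext fun i => ?_⟩
    by_cases h : i < m
    · simp [h]
    · simp only [dif_neg h]
      exact (hz i (le_of_not_gt h)).symm
  exact (Set.finite_range _).subset hsub

lemma key_step (J : Set (Set Cantor)) (hopen : ∀ U ∈ J, IsOpen U)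
    (hcov : IsOmegaCover J Qset) (x : Cantor) (hx : x ∈ Sset) (m : ℕ) :
    ∃ (D : Set Cantor) (n : ℕ), D ∈ J ∧ m < kseq n ∧
      (∀ i ∈ Set.Ico (kseq n) (kseq (n + 1)), x i = 1) ∧
      ∀ z : Cantor, (∀ i, m ≤ i → i < kseq n → z i = 0) → z ∈ D := by
  classical
  have hSfin := support_finite m
  set F := hSfin.toFinset with hF
  have hFQ : (↑F : Set Cantor) ⊆ Qset := by
    intro z hz
    rw [hF, Set.Finite.coe_toFinset] at hz
    exact eventually_atTop.mpr ⟨m, hz⟩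
  obtain ⟨D, hDJ, hFD⟩ := hcov F hFQ
  have hlq : ∀ q : Cantor, ∃ l, q ∈ D → ∀ z : Cantor, (∀ i < l, z i = q i) → z ∈ D := by
    intro q
    by_cases hq : q ∈ D
    · obtain ⟨l, hl⟩ := cylinder_subset D (hopen D hDJ) q hq
      exact ⟨l, fun _ => hl⟩
    · exact ⟨0, fun h => absurd h hq⟩
  choose L hL using hlq
  set l := max (m + 1) (F.sup L) with hldef
  obtain ⟨n, hn, hfull⟩ := frequently_atTop.mp hx l
  have hln : l ≤ kseq n := le_trans hn (le_of_lt (lt_kseq n))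
  refine ⟨D, n, hDJ, lt_of_lt_of_le (lt_of_lt_of_le (Nat.lt_succ_self m)
    (le_max_left _ _)) hln, hfull, ?_⟩
  intro z hz
  set q : Cantor := fun i => if i < m then z i else 0 with hqdef
  have hqF : q ∈ F := by
    rw [hF, Set.Finite.mem_toFinset]
    intro i hi
    simp [hqdef, Nat.not_lt_of_le hi]
  have hqD : q ∈ D := hFD hqF
  apply hL q hqD z
  intro i hi
  by_cases h : i < m
  · simp [hqdef, h]
  · have h1 : m ≤ i := le_of_not_gt h
    have h2 : i < kseq n := by
      calc i < L q := hi
        _ ≤ F.sup L := Finset.le_sup hqF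
        _ ≤ l := le_max_right _ _
        _ ≤ kseq n := hln
    simp [hqdef, h, hz i h1 h2]

/-- **Lemma 1.** If `J` is an open ω-cover of `ℚ` and `x ∈ 𝒮`, then there are a sequence
`D n ∈ J` and `y ∈ [x]*` such that `ℚ ∪ [y]* ⊆ ⋃_m ⋂_{n>m} D n`. -/
theorem exists_seq_and_star_subset_of_omegaCover
    (J : Set (Set Cantor)) (hopen : ∀ U ∈ J, IsOpen U)
    (hcov : IsOmegaCover J Qset) (x : Cantor) (hx : x ∈ Sset) :
    ∃ D : ℕ → Set Cantor, (∀ n, D n ∈ J) ∧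
      ∃ y ∈ starSet x, Qset ∪ starSet y ⊆ ⋃ m, ⋂ n > m, D n := by
  classical
  choose Dm nm hmem hlt hfull hkey using key_step J hopen hcov x hx
  -- the recursive sequence of cut points
  set ms : ℕ → ℕ := fun j => Nat.rec 0 (fun _ prev => kseq (nm prev + 1)) j with hms
  have hmsS : ∀ j, ms (j + 1) = kseq (nm (ms j) + 1) := fun j => rfl
  set nb : ℕ → ℕ := fun j => nm (ms j) with hnb
  have hmono : StrictMono ms := by
    apply strictMono_nat_of_lt_succ
    intro j
    rw [hmsS]
    exact lt_trans (hlt (ms j)) (kseq_lt_succ _)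
  have hge : ∀ j, j ≤ ms j := fun j => hmono.le_apply
  -- the element y : ones exactly on the chosen blocks
  set y : Cantor := fun i =>
    if ∃ j, kseq (nb j) ≤ i ∧ i < kseq (nb j + 1) then 1 else 0 with hy
  have hyblock : ∀ j i, kseq (nb j) ≤ i → i < kseq (nb j + 1) → y i = 1 := by
    intro j i h1 h2
    simp only [hy]
    rw [if_pos ⟨j, h1, h2⟩]
  have hyzero : ∀ i, (¬ ∃ j, kseq (nb j) ≤ i ∧ i < kseq (nb j + 1)) → y i = 0 := by
    intro i h
    simp only [hy]
    rw [if_neg h]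
  have hyS : y ∈ Sset := by
    rw [Sset, Set.mem_setOf_eq, frequently_atTop]
    intro N
    have hNlt : N < nb (kseq N) := by
      have h1 : kseq N ≤ ms (kseq N) := hge _
      have h2 : ms (kseq N) < kseq (nb (kseq N)) := hlt _
      exact kseq_strictMono.lt_iff_lt.mp (lt_of_le_of_lt h1 h2)
    exact ⟨nb (kseq N), le_of_lt hNlt, fun i hi => hyblock _ _ hi.1 hi.2⟩
  have hyx : y ∈ starSet x := by
    refine ⟨hyS, Filter.Eventually.of_forall fun i => ?_⟩
    by_cases h : ∃ j, kseq (nb j) ≤ i ∧ i < kseq (nb j + 1)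
    · obtain ⟨j, h1, h2⟩ := h
      rw [hyblock j i h1 h2, hfull (ms j) i ⟨h1, h2⟩]
    · rw [hyzero i h]
      exact Nat.zero_le _
  refine ⟨fun j => Dm (ms j), fun j => hmem _, y, hyx, ?_⟩
  have hmain : ∀ z : Cantor, ∀ N : ℕ,
      (∀ i, N ≤ i → ∀ j, N < j → ms j ≤ i → i < kseq (nb j) → z i = 0) →
      z ∈ ⋃ m, ⋂ n > m, Dm (ms n) := by
    intro z N hzN
    refine Set.mem_iUnion.mpr ⟨N, ?_⟩
    simp only [Set.mem_iInter]
    intro j hj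
    apply hkey (ms j) z
    intro i h1 h2
    have hNi : N ≤ i := le_trans (le_of_lt hj) (le_trans (hge j) h1)
    exact hzN i hNi j hj h1 h2
  intro z hz
  rcases hz with hz | hz
  · obtain ⟨N, hN⟩ := eventually_atTop.mp hz
    exact hmain z N fun i hi _ _ _ _ => hN i hi
  · obtain ⟨N, hN⟩ := eventually_atTop.mp hz.2
    apply hmain z N
    intro i hNi j hj hmsji hik
    have hy0 : y i = 0 := by
      apply hyzero
      rintro ⟨j', h1, h2⟩
      rcases lt_trichotomy j' j with hlt' | heq | hgt
      · -- block j' ends before ms j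
        have : i < ms (j' + 1) := by rw [hmsS]; exact h2
        have hmsle : ms (j' + 1) ≤ ms j := hmono.monotone hlt'
        have : i < ms j := lt_of_lt_of_le this hmsle
        exact absurd hmsji (not_le_of_gt this)
      · subst heq
        exact absurd hik (not_lt_of_ge h1)
      · -- block j' starts after kseq (nb j)
        have h3 : ms (j + 1) ≤ ms j' := hmono.monotone hgt
        have h4 : kseq (nb j + 1) ≤ ms j' := by rw [← hmsS]; exact h3
        have h5 : kseq (nb j) < kseq (nb j + 1) := kseq_lt_succ _
        have h6 : ms j' < kseq (nb j') := hlt _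
        have : kseq (nb j) < kseq (nb j') := lt_of_lt_of_le h5 (le_trans h4 (le_of_lt h6))
        have : i < kseq (nb j') := lt_trans hik this
        exact absurd h1 (not_le_of_gt this)
    have hvle : (z i).val ≤ (y i).val := hN i hNi
    rw [hy0] at hvle
    simp only [ZMod.val_zero, Nat.le_zero] at hvle
    exact (ZMod.val_eq_zero _).mp hvle
end

section
/- Let κ be a cardinal such that every ⊆*-decreasing κ-sequence of infinite subsets of ω admits an infinite pseudo-intersection (this holds whenever κ < 𝔭). Suppose (x_α)_{α<κ} is a sequence of elements of 2^ω with x_0 ∈ 𝒮 and x_α ∈ [x_β]* whenever β < α < κ. Then ⋂_{α<κ} [x_α]* ≠ ∅. -/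
open Set MeasureTheory Filter Pointwise
open scoped ENNReal

lemma zmod2_val_one_of_eq_one {a : ZMod 2} (h : a = 1) : a.val = 1 := by
  subst h; rfl

lemma zmod2_eq_one_of_val {a : ZMod 2} (h : 1 ≤ a.val) : a = 1 := by
  revert a; decide

/-- **Lemma 2.** Let `κ` be a cardinal such that every `⊆*`-decreasing `κ`-sequence of
infinite subsets of `ω` has an infinite pseudo-intersection.  If `(x_α)_{α<κ}` is a
sequence in `2^ω` with `x_0 ∈ 𝒮` and `x_α ∈ [x_β]*` for `β < α < κ`, then
`⋂_{α<κ} [x_α]* ≠ ∅`. -/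
theorem iInter_starSet_nonempty (κ : Cardinal.{0})
    (hκ : ∀ Y : Ordinal.{0} → Set ℕ,
      (∀ α < κ.ord, (Y α).Infinite) →
      (∀ β α : Ordinal.{0}, β < α → α < κ.ord → (Y α \ Y β).Finite) →
      ∃ A : Set ℕ, A.Infinite ∧ ∀ α < κ.ord, (A \ Y α).Finite)
    (x : Ordinal.{0} → Cantor) (h0 : x 0 ∈ Sset)
    (hdec : ∀ β α : Ordinal.{0}, β < α → α < κ.ord → x α ∈ starSet (x β)) :
    ∃ z : Cantor, ∀ α < κ.ord, z ∈ starSet (x α) := by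
  classical
  set Y : Ordinal.{0} → Set ℕ :=
    fun α => {n | ∀ i ∈ Set.Ico (kseq n) (kseq (n+1)), x α i = 1} with hYdef
  have hS : ∀ α < κ.ord, x α ∈ Sset := by
    intro α hα
    rcases eq_or_ne α 0 with rfl | hne
    · exact h0
    · exact (hdec 0 α (pos_iff_ne_zero.2 hne) hα).1
  have hinf : ∀ α < κ.ord, (Y α).Infinite := by
    intro α hα
    have := hS α hα
    rw [Sset, Set.mem_setOf_eq, Nat.frequently_atTop_iff_infinite] at this
    exact this
  have hdecY : ∀ β α : Ordinal.{0}, β < α → α < κ.ord → (Y α \ Y β).Finite := by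
    intro β α hβα hα
    obtain ⟨N, hN⟩ := Filter.eventually_atTop.1 (hdec β α hβα hα).2
    apply Set.Finite.subset (Set.finite_Iio N)
    rintro n ⟨hnα, hnβ⟩
    rw [Set.mem_Iio]
    by_contra hn
    push_neg at hn
    apply hnβ
    intro i hi
    have hiN : N ≤ i := le_trans (le_trans hn (lt_kseq n).le) hi.1
    have h1 : x α i = 1 := hnα i hi
    exact zmod2_eq_one_of_val (by
      have := hN i hiN
      rw [zmod2_val_one_of_eq_one h1] at this
      exact this)
  obtain ⟨A, hAinf, hA⟩ := hκ Y hinf hdecY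
  refine ⟨fun i => if ∃ n ∈ A, i ∈ Set.Ico (kseq n) (kseq (n+1)) then 1 else 0, ?_⟩
  set z : Cantor := fun i => if ∃ n ∈ A, i ∈ Set.Ico (kseq n) (kseq (n+1)) then 1 else 0
    with hzdef
  have hzS : z ∈ Sset := by
    rw [Sset, Set.mem_setOf_eq, Filter.frequently_atTop]
    intro N
    obtain ⟨n, hnA, hn⟩ := hAinf.exists_gt N
    refine ⟨n, hn.le, fun i hi => ?_⟩
    rw [hzdef]
    exact if_pos ⟨n, hnA, hi⟩
  intro α hα
  refine ⟨hzS, ?_⟩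
  obtain ⟨M, hM⟩ := (hA α hα).bddAbove
  rw [Filter.eventually_atTop]
  refine ⟨kseq (M+1), fun i hi => ?_⟩
  rw [hzdef]
  beta_reduce
  by_cases h : ∃ n ∈ A, i ∈ Set.Ico (kseq n) (kseq (n+1))
  · obtain ⟨n, hnA, hin⟩ := h
    have hMn : M < n := by
      have : kseq (M+1) < kseq (n+1) := lt_of_le_of_lt hi hin.2
      have := kseq_strictMono.lt_iff_lt.1 this
      omega
    have hnY : n ∈ Y α := by
      by_contra hnY
      exact absurd (hM ⟨hnA, hnY⟩) (by omega)
    rw [if_pos (⟨n, hnA, hin⟩ : ∃ n ∈ A, i ∈ Set.Ico (kseq n) (kseq (n+1))),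
      hnY i hin]
  · simp only [if_neg h]
    exact Nat.zero_le _
end

section
/- Let 𝒥 be an ω-cover of ℚ by open subsets of 2^ω. Then there exist a sequence (l_n)_{n∈ω} of natural numbers and a sequence (D'_n)_{n∈ω} of members of 𝒥 such that for every n and every z ∈ 2^ω, if z(i) = 0 for all i with n ≤ i < l_n, then z ∈ D'_n. -/
open Set MeasureTheory Filter Pointwise
open scoped ENNReal

private def extendFin (n : ℕ) (v : Fin n → ZMod 2) : Cantor :=
  fun i => if h : i < n then v ⟨i, h⟩ else 0

private lemma open_cyl {U : Set Cantor} (hU : IsOpen U) (x : Cantor) (hx : x ∈ U) :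
    ∃ m, ∀ z : Cantor, (∀ i < m, z i = x i) → z ∈ U := by
  rw [isOpen_pi_iff] at hU
  obtain ⟨I, u, h1, h2⟩ := hU x hx
  refine ⟨I.sup id + 1, fun z hz => h2 ?_⟩
  intro i hi
  rw [hz i (Nat.lt_succ_of_le (Finset.le_sup (f := id) hi))]
  exact (h1 i hi).2

/-- If `J` is an open ω-cover of `ℚ`, then there are `l : ℕ → ℕ` and members `D' n ∈ J`
such that every `z ∈ 2^ω` vanishing on `[n, l_n)` belongs to `D'_n`. -/
theorem exists_lengths_and_members_of_omegaCover
    (J : Set (Set Cantor)) (hopen : ∀ U ∈ J, IsOpen U) (hcov : IsOmegaCover J Qset) :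
    ∃ (l : ℕ → ℕ) (D : ℕ → Set Cantor),
      ∀ n, D n ∈ J ∧ ∀ z : Cantor, (∀ i, n ≤ i → i < l n → z i = 0) → z ∈ D n := by
  classical
  choose U hUJ hUF using fun n => hcov (Finset.image (extendFin n) Finset.univ) (by
    intro x hx
    simp only [Finset.coe_image, Set.mem_image, Finset.coe_univ, Set.image_univ,
      Set.mem_range] at hx
    obtain ⟨v, rfl⟩ := hx
    exact Filter.eventually_atTop.2 ⟨n, fun i hi => dif_neg (Nat.not_lt.2 hi)⟩)
  have key : ∀ n (v : Fin n → ZMod 2),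
      ∃ m, ∀ z : Cantor, (∀ i < m, z i = extendFin n v i) → z ∈ U n := fun n v =>
    open_cyl (hopen _ (hUJ n)) _
      (hUF n (Finset.mem_coe.2 (Finset.mem_image_of_mem _ (Finset.mem_univ v))))
  choose m hm using key
  refine ⟨fun n => Finset.univ.sup (m n), U, fun n => ⟨hUJ n, fun z hz => ?_⟩⟩
  set v : Fin n → ZMod 2 := fun i => z i with hv
  apply hm n v
  intro i hi
  unfold extendFin
  split
  · rfl
  · next h =>
      exact hz i (Nat.not_lt.1 h)
        (lt_of_lt_of_le hi (Finset.le_sup (Finset.mem_univ v)))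
end
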